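/- arXiv:1612.06178 — 6 statements merged into one kernel-verified Lean document; each statement's English description precedes it below -/
import Mathlib

section
/- Let U be a subgroup of index m in a group Γ, and let k ≥ 1. Then the number of subgroups H of Γ with U ≤ H and |H : U| ≤ k is at most m^(log₂ k). -/
/-!
Replacing `U` by `U ⊔ closure {x}` for some `x ∈ H \ U` at least halves the index in `H`, so an
intermediate subgroup `H` with `|H : U| ≤ k` is generated by `U` and at most `n = ⌊log₂ k⌋`
further elements. Such a subgroup only depends on the cosets `xᵢU` of its generators, which gives
at most `mⁿ ≤ m ^ (log₂ k)` of them.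
-/

open Set

namespace Subgroup

variable {Γ : Type*} [Group Γ] {U : Subgroup Γ}

theorem sup_closure_range_le_of_forall_inv_mul_mem {ι : Type*} {a b : ι → Γ}
    (hab : ∀ i, (a i)⁻¹ * b i ∈ U) :
    U ⊔ closure (range b) ≤ U ⊔ closure (range a) := by
  refine sup_le le_sup_left ((closure_le _).2 ?_)
  rintro _ ⟨i, rfl⟩
  have ha : a i ∈ U ⊔ closure (range a) := mem_sup_right (subset_closure ⟨i, rfl⟩)
  simpa using mul_mem ha (mem_sup_left (hab i))

theorem sup_closure_range_out_mk {ι : Type*} (g : ι → Γ) :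
    U ⊔ closure (range fun i ↦ (g i : Γ ⧸ U).out) = U ⊔ closure (range g) := by
  have hg : ∀ i, (g i)⁻¹ * (g i : Γ ⧸ U).out ∈ U := fun i ↦
    QuotientGroup.eq.mp (QuotientGroup.out_eq' _).symm
  refine le_antisymm (sup_closure_range_le_of_forall_inv_mul_mem hg)
    (sup_closure_range_le_of_forall_inv_mul_mem fun i ↦ ?_)
  simpa using inv_mem (hg i)

theorem card_le_index_pow_of_forall_eq_sup_closure_range [U.FiniteIndex] {n : ℕ}
    (S : Set (Subgroup Γ)) (hS : ∀ H ∈ S, ∃ g : Fin n → Γ, H = U ⊔ closure (range g)) :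
    Nat.card S ≤ U.index ^ n := by
  let f : (Fin n → Γ ⧸ U) → Subgroup Γ := fun c ↦ U ⊔ closure (range fun i ↦ (c i).out)
  have hSf : S ⊆ range f := by
    intro H hH
    obtain ⟨g, rfl⟩ := hS H hH
    exact ⟨fun i ↦ g i, sup_closure_range_out_mk g⟩
  calc Nat.card S ≤ Nat.card (range f) := Nat.card_mono (finite_range f) hSf
    _ ≤ Nat.card (Fin n → Γ ⧸ U) := Finite.card_range_le f
    _ = U.index ^ n := by rw [Nat.card_fun, Nat.card_fin, index]

theorem two_mul_relIndex_le_of_lt {K H : Subgroup Γ} (hUK : U < K) (hKH : K ≤ H)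
    (hUH : U.relIndex H ≠ 0) : 2 * K.relIndex H ≤ U.relIndex H := by
  have htower := relIndex_mul_relIndex U K H hUK.le hKH
  have hUK0 : U.relIndex K ≠ 0 := mt (relIndex_eq_zero_of_le_right hKH) hUH
  have hUK1 : U.relIndex K ≠ 1 := fun h ↦ hUK.not_ge (relIndex_eq_one.mp h)
  rw [← htower]
  exact Nat.mul_le_mul_right _ (by omega)

theorem exists_eq_sup_closure_range_of_relIndex_lt {H : Subgroup Γ} (n : ℕ) (hUH : U ≤ H)
    (hUH0 : U.relIndex H ≠ 0) (hlt : U.relIndex H < 2 ^ (n + 1)) :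
    ∃ g : Fin n → Γ, H = U ⊔ closure (range g) := by
  induction n generalizing U with
  | zero =>
    have hHU : H ≤ U := relIndex_eq_one.mp (by omega)
    exact ⟨Fin.elim0, by simp [le_antisymm hHU hUH]⟩
  | succ n ih =>
    by_cases hHU : H ≤ U
    · exact ⟨fun _ ↦ 1, by simp [le_antisymm hHU hUH]⟩
    obtain ⟨x, hxH, hxU⟩ := SetLike.exists_of_lt (lt_of_le_not_ge hUH hHU)
    set K := U ⊔ closure {x}
    have hxK : x ∈ K := mem_sup_right (subset_closure rfl)
    have hUK : U < K := lt_of_le_of_ne le_sup_left fun h ↦ hxU (h ▸ hxK)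
    have hKH : K ≤ H := sup_le hUH ((closure_le _).2 (singleton_subset_iff.2 hxH))
    have hdouble := two_mul_relIndex_le_of_lt hUK hKH hUH0
    obtain ⟨g, hg⟩ := ih hKH (mt (relIndex_eq_zero_of_le_left hUK.le) hUH0) (by have := pow_succ 2 (n + 1); omega)
    refine ⟨Fin.cons x g, ?_⟩
    rw [hg, Fin.range_cons, sup_assoc, ← closure_union, singleton_union]

end Subgroup

open Subgroup in
theorem count_intermediate_subgroups_general {Γ : Type*} [Group Γ] (U : Subgroup Γ)
    (m k : ℕ) (hm : U.index = m) (hm0 : m ≠ 0) :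
    (Nat.card {H : Subgroup Γ // U ≤ H ∧ U.relIndex H ≤ k} : ℝ) ≤
      (m : ℝ) ^ Real.logb 2 k := by
  have : U.FiniteIndex := ⟨hm ▸ hm0⟩
  have hcard : Nat.card {H : Subgroup Γ // U ≤ H ∧ U.relIndex H ≤ k} ≤ m ^ Nat.log 2 k := by
    rw [← hm]
    refine card_le_index_pow_of_forall_eq_sup_closure_range {H | U ≤ H ∧ U.relIndex H ≤ k} ?_
    rintro H ⟨hUH, hHk⟩
    exact exists_eq_sup_closure_range_of_relIndex_lt _ hUH
      (isFiniteRelIndex_of_finiteIndex (K := H)).relIndex_ne_zero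
      (hHk.trans_lt (Nat.lt_pow_succ_log_self one_lt_two k))
  calc (Nat.card {H : Subgroup Γ // U ≤ H ∧ U.relIndex H ≤ k} : ℝ)
      ≤ (m : ℝ) ^ (Nat.log 2 k : ℝ) := by rw [Real.rpow_natCast]; exact_mod_cast hcard
    _ ≤ (m : ℝ) ^ Real.logb 2 k :=
      Real.rpow_le_rpow_of_exponent_le (mod_cast Nat.one_le_iff_ne_zero.2 hm0)
        (Real.natLog_le_logb k 2)

/-- If `U` has index `m` in `Γ`, then the number of subgroups `H` with `U ≤ H` and
`|H : U| ≤ k` is at most `m ^ (log₂ k)`. -/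
theorem count_intermediate_subgroups {Γ : Type*} [Group Γ] (U : Subgroup Γ)
    (m k : ℕ) (hm : U.index = m) (hm0 : m ≠ 0) (hk : 1 ≤ k) :
    (Nat.card {H : Subgroup Γ // U ≤ H ∧ U.relIndex H ≤ k} : ℝ) ≤
      (m : ℝ) ^ Real.logb 2 k :=
  count_intermediate_subgroups_general U m k hm hm0
end

section
/- Let Γ be a group such that |Γ : K_n(Γ)| ≤ n^c for all n, where K_n(Γ) is the intersection of the kernels of all irreducible complex representations of Γ of dimension at most n. Then the number of subgroups of Γ of index at most n is at most n^(c² log₂ n). -/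
/-- A matrix representation is irreducible if the only invariant subspaces are `⊥` and `⊤`. -/
def MatIsIrred {G : Type*} [Group G] {ι : Type*} [Fintype ι] [DecidableEq ι]
    (ρ : G →* Matrix.GeneralLinearGroup ι ℂ) : Prop :=
  ∀ W : Submodule ℂ (ι → ℂ),
    (∀ g : G, ∀ v ∈ W, Matrix.mulVec (ρ g : Matrix ι ι ℂ) v ∈ W) → W = ⊥ ∨ W = ⊤

/-- `Kn Γ n` is the intersection of the kernels of all finite-image irreducible complex
representations of `Γ` of dimension at most `n`. -/
noncomputable def Kn (Γ : Type*) [Group Γ] (n : ℕ) : Subgroup Γ :=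
  ⨅ (d : ℕ) (_ : d ≤ n) (ρ : Γ →* Matrix.GeneralLinearGroup (Fin d) ℂ)
    (_ : (Set.range ρ).Finite) (_ : MatIsIrred ρ), ρ.ker

/-!
An element of finite order acting trivially on a subrepresentation and on the quotient is
unipotent, hence trivial in characteristic zero; by induction on the dimension, `K_n(Γ)` therefore
lies in the kernel of every finite-image representation of dimension at most `n`, in particular
of the permutation representation on `Γ ⧸ H` whenever `|Γ : H| ≤ n`. So the subgroups of index
at most `n` correspond to subgroups of the group `Γ ⧸ K_n(Γ)` of order `m ≤ n^c`. Every subgroup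
of a group of order `m` is generated by `log₂ m` elements, since each new generator at least
doubles the order, so there are at most `m^(log₂ m) = 2^((log₂ m)²) ≤ 2^((c log₂ n)²)` of them.
-/

open Module Matrix

theorem MonoidHom.finite_range_of_ker_le {G M N : Type*} [Group G] [MulOneClass M] [MulOneClass N]
    (f : G →* M) (g : G →* N) (hf : (Set.range f).Finite) (h : f.ker ≤ g.ker) :
    (Set.range g).Finite := by
  refine (hf.image fun m => g (Function.invFun f m)).subset ?_
  rintro _ ⟨x, rfl⟩
  exact ⟨f x, ⟨x, rfl⟩, g.eq_iff.mpr (h (f.eq_iff.mp (Function.invFun_eq ⟨x, rfl⟩)))⟩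

theorem MonoidHom.isOfFinOrder_of_finite_range {G M : Type*} [Group G] [Monoid M] (f : G →* M)
    (hf : (Set.range f).Finite) (g : G) : IsOfFinOrder (f g) := by
  have hu : (Set.range f.toHomUnits).Finite :=
    f.finite_range_of_ker_le _ hf (f.ker_toHomUnits).ge
  refine (Units.isOfFinOrder_val (u := f.toHomUnits g)).mpr (finite_powers.mp <| hu.subset ?_)
  rintro _ ⟨j, rfl⟩
  exact ⟨g ^ j, map_pow _ g j⟩

theorem IsOfFinOrder.eq_one_of_sub_one_sq_eq_zero {R : Type*} [Ring R] [IsAddTorsionFree R]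
    {a : R} (ha : IsOfFinOrder a) (h : (a - 1) ^ 2 = 0) : a = 1 := by
  obtain ⟨m, hm, ham⟩ := isOfFinOrder_iff_pow_eq_one.mp ha
  obtain ⟨N, rfl⟩ : ∃ N, a = 1 + N := ⟨a - 1, by abel⟩
  rw [add_sub_cancel_left, sq] at h
  have hpow : ∀ j : ℕ, (1 + N) ^ j = 1 + j • N := by
    intro j
    induction j with
    | zero => simp
    | succ j ih =>
      simp only [pow_succ, ih, add_mul, mul_add, smul_mul_assoc, h, one_mul, mul_one, smul_zero,
        add_zero, succ_nsmul]
      abel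
  have hm0 : m • N = m • 0 := by rw [smul_zero, ← add_eq_left (a := 1), ← hpow, ham]
  rw [nsmul_right_injective hm.ne' hm0, add_zero]

theorem MonoidAlgebra.finrank_eq_card (k : Type*) {X : Type*} [Field k] [Finite X] :
    finrank k (MonoidAlgebra k X) = Nat.card X := by
  have := Fintype.ofFinite X
  rw [(coeffLinearEquiv k).finrank_eq, finrank_finsupp_self, Nat.card_eq_fintype_card]

namespace Representation

variable {k G V : Type*} [Field k] [Group G] [AddCommGroup V] [Module k V]
  (ρ : Representation k G V)

theorem ker_le_ker_subrepresentation (W : Submodule k V) (hW : ∀ g, W ≤ W.comap (ρ g)) :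
    ρ.ker ≤ (ρ.subrepresentation W hW).ker := fun g hg => by
  ext w
  simp [MonoidHom.mem_ker.mp hg]

theorem ker_le_ker_quotient (W : Submodule k V) (hW : ∀ g, W ≤ W.comap (ρ g)) :
    ρ.ker ≤ (ρ.quotient W hW).ker := fun g hg => by
  ext v
  simp [MonoidHom.mem_ker.mp hg]

theorem ker_subrepresentation_inf_ker_quotient_le [CharZero k] (W : Submodule k V)
    (hW : ∀ g, W ≤ W.comap (ρ g)) (hρ : ∀ g, IsOfFinOrder (ρ g)) :
    (ρ.subrepresentation W hW).ker ⊓ (ρ.quotient W hW).ker ≤ ρ.ker := by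
  have : IsAddTorsionFree (Module.End k V) := .of_isTorsionFree k _
  intro g hg
  obtain ⟨hsub, hquot⟩ := Subgroup.mem_inf.mp hg
  rw [MonoidHom.mem_ker] at hsub hquot ⊢
  have hfixW : ∀ w ∈ W, ρ g w = w := fun w hw =>
    congr_arg Subtype.val (LinearMap.congr_fun hsub ⟨w, hw⟩)
  have hmodW : ∀ v, ρ g v - v ∈ W := fun v =>
    (Submodule.Quotient.eq W).mp (LinearMap.congr_fun hquot (W.mkQ v))
  refine (hρ g).eq_one_of_sub_one_sq_eq_zero (LinearMap.ext fun v => ?_)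
  simp [sq, hfixW _ (hmodW v)]

noncomputable def toMatrixGL {ι : Type*} [Fintype ι] [DecidableEq ι] (b : Basis ι k V) :
    G →* GL ι k :=
  (GeneralLinearGroup.toLin' b).symm.toMonoidHom.comp ρ.asGroupHom

theorem ker_toMatrixGL {ι : Type*} [Fintype ι] [DecidableEq ι] (b : Basis ι k V) :
    (ρ.toMatrixGL b).ker = ρ.ker := by
  ext g
  simp [toMatrixGL, MonoidHom.mem_ker, asGroupHom]

theorem ker_toPermHom_le_ker_ofMulAction (X : Type*) [MulAction G X] :
    (MulAction.toPermHom G X).ker ≤ (ofMulAction k G X).ker := fun g hg => by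
  have hg' : (g • · : X → X) = id := funext fun x => Equiv.Perm.ext_iff.mp hg x
  rw [MonoidHom.mem_ker, ofMulAction_def, hg']
  ext x
  simp

theorem ker_ofMulAction_quotient_le (H : Subgroup G) : (ofMulAction k G (G ⧸ H)).ker ≤ H :=
  fun g hg => by
    have h1 := LinearMap.congr_fun (MonoidHom.mem_ker.mp hg)
      (MonoidAlgebra.single ((1 : G) : G ⧸ H) (1 : k))
    rw [ofMulAction_single, Module.End.one_apply] at h1
    have h2 := MonoidAlgebra.single_left_injective one_ne_zero h1
    rwa [MulAction.Quotient.smul_coe, smul_eq_mul, mul_one, QuotientGroup.eq, mul_one,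
      inv_mem_iff] at h2

end Representation

noncomputable def matrixRepresentation {k G ι : Type*} [CommRing k] [Monoid G] [Fintype ι]
    [DecidableEq ι] (ρ : G →* GL ι k) : Representation k G (ι → k) :=
  (toLinAlgEquiv' : Matrix ι ι k ≃ₐ[k] Module.End k (ι → k)).toMonoidHom.comp
    ((Units.coeHom _).comp ρ)

theorem ker_matrixRepresentation {k G ι : Type*} [CommRing k] [Group G] [Fintype ι]
    [DecidableEq ι] (ρ : G →* GL ι k) : (matrixRepresentation ρ).ker = ρ.ker := by
  ext g
  simp only [MonoidHom.mem_ker, matrixRepresentation, MonoidHom.comp_apply, Units.coeHom_apply,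
    MulEquiv.coe_toMonoidHom]
  exact (map_eq_one_iff _ (MulEquiv.injective _)).trans Units.val_eq_one

section Kn

variable {Γ : Type*} [Group Γ] {n : ℕ}

instance Kn_normal (n : ℕ) : (Kn Γ n).Normal :=
  Subgroup.normal_iInf_normal fun _ => Subgroup.normal_iInf_normal fun _ =>
    Subgroup.normal_iInf_normal fun _ => Subgroup.normal_iInf_normal fun _ =>
      Subgroup.normal_iInf_normal fun _ => MonoidHom.normal_ker _

theorem Kn_le_ker_of_matIsIrred {d : ℕ} (hd : d ≤ n) (ρ : Γ →* GL (Fin d) ℂ)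
    (hρ : (Set.range ρ).Finite) (hirr : MatIsIrred ρ) : Kn Γ n ≤ ρ.ker :=
  iInf₂_le_of_le d hd <| iInf₂_le_of_le ρ hρ <| iInf_le _ hirr

theorem Kn_le_ker_of_dim_le {d : ℕ} (hd : d ≤ n) (ρ : Γ →* GL (Fin d) ℂ)
    (hρ : (Set.range ρ).Finite) : Kn Γ n ≤ ρ.ker := by
  induction d using Nat.strong_induction_on with | _ d IH => ?_
  have hsmall : ∀ {V : Type} [AddCommGroup V] [Module ℂ V] [FiniteDimensional ℂ V]
      (σ : Representation ℂ Γ V), (Set.range σ).Finite → finrank ℂ V < d →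
        Kn Γ n ≤ σ.ker := by
    intro V _ _ _ σ hσ hV
    rw [← σ.ker_toMatrixGL (finBasis ℂ V)]
    exact IH _ hV (hV.le.trans hd) _ <|
      σ.finite_range_of_ker_le _ hσ (σ.ker_toMatrixGL _).ge
  by_cases hirr : MatIsIrred ρ
  · exact Kn_le_ker_of_matIsIrred hd ρ hρ hirr
  obtain ⟨W, hW, hbot, htop⟩ : ∃ W : Submodule ℂ (Fin d → ℂ),
      (∀ g, ∀ v ∈ W, (ρ g : Matrix (Fin d) (Fin d) ℂ) *ᵥ v ∈ W) ∧ W ≠ ⊥ ∧ W ≠ ⊤ := by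
    simpa [MatIsIrred] using hirr
  set σ := matrixRepresentation ρ
  have hWσ : ∀ g, W ≤ W.comap (σ g) := fun g v hv => hW g v hv
  have hσ : (Set.range σ).Finite :=
    ρ.finite_range_of_ker_le σ hρ (ker_matrixRepresentation ρ).ge
  have hdim := W.finrank_quotient_add_finrank
  have hWpos := Submodule.one_le_finrank_iff.mpr hbot
  have hWlt := Submodule.finrank_lt htop
  rw [finrank_fin_fun] at hdim hWlt
  rw [← ker_matrixRepresentation]
  refine le_trans (le_inf ?_ ?_) <|
    σ.ker_subrepresentation_inf_ker_quotient_le W hWσ (σ.isOfFinOrder_of_finite_range hσ)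
  · exact hsmall _ (σ.finite_range_of_ker_le _ hσ (σ.ker_le_ker_subrepresentation W hWσ)) hWlt
  · exact hsmall _ (σ.finite_range_of_ker_le _ hσ (σ.ker_le_ker_quotient W hWσ)) (by omega)

theorem Kn_le_ker_of_finrank_le {V : Type*} [AddCommGroup V] [Module ℂ V]
    [FiniteDimensional ℂ V] (σ : Representation ℂ Γ V) (hσ : (Set.range σ).Finite)
    (hV : finrank ℂ V ≤ n) : Kn Γ n ≤ σ.ker := by
  rw [← σ.ker_toMatrixGL (finBasis ℂ V)]
  exact Kn_le_ker_of_dim_le hV _ (σ.finite_range_of_ker_le _ hσ (σ.ker_toMatrixGL _).ge)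

theorem Kn_le_of_index_le {H : Subgroup Γ} (h0 : H.index ≠ 0) (hle : H.index ≤ n) :
    Kn Γ n ≤ H := by
  have : H.FiniteIndex := ⟨h0⟩
  let σ := Representation.ofMulAction ℂ Γ (Γ ⧸ H)
  have hσ : (Set.range σ).Finite := (MulAction.toPermHom Γ (Γ ⧸ H)).finite_range_of_ker_le σ
    (Set.toFinite _) (Representation.ker_toPermHom_le_ker_ofMulAction _)
  have hdim : finrank ℂ (MonoidAlgebra ℂ (Γ ⧸ H)) ≤ n := by
    rwa [MonoidAlgebra.finrank_eq_card, ← Subgroup.index_eq_card]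
  exact (Kn_le_ker_of_finrank_le σ hσ hdim).trans (Representation.ker_ofMulAction_quotient_le H)

end Kn

namespace Subgroup

section Finite

variable {Q : Type*} [Group Q] [Finite Q]

theorem two_mul_card_le_card_of_lt {T S : Subgroup Q} (h : T < S) :
    2 * Nat.card T ≤ Nat.card S := by
  obtain ⟨j, hj⟩ := card_dvd_of_le h.le
  have hne : Nat.card S ≠ Nat.card T := fun he => h.ne (eq_of_le_of_card_ge h.le he.le)
  have hS : Nat.card S ≠ 0 := Nat.card_pos.ne'
  have hj2 : 2 ≤ j := by
    rcases j with _ | _ | j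
    · simp [hj] at hS
    · simp [hj] at hne
    · omega
  rw [hj, mul_comm 2]
  exact Nat.mul_le_mul_left _ hj2

theorem exists_finset_sup_closure_eq {T S : Subgroup Q} (h : T ≤ S) :
    ∃ s : Finset Q, T ⊔ closure s = S ∧ 2 ^ s.card * Nat.card T ≤ Nat.card S := by
  classical
  induction T using WellFoundedGT.induction with | _ T IH => ?_
  rcases h.eq_or_lt with rfl | hlt
  · exact ⟨∅, by simp⟩
  obtain ⟨x, hxS, hxT⟩ := SetLike.exists_of_lt hlt
  have hTx : T < T ⊔ closure {x} :=
    lt_of_le_of_ne le_sup_left fun he => hxT (he ▸ mem_sup_right (subset_closure rfl))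
  have hxS' : T ⊔ closure {x} ≤ S := sup_le h (closure_le S |>.mpr (by simpa using hxS))
  obtain ⟨s, hs, hcard⟩ := IH _ hTx hxS'
  refine ⟨insert x s, ?_, ?_⟩
  · rw [Finset.coe_insert, Set.insert_eq, closure_union, ← sup_assoc, hs]
  · calc 2 ^ (insert x s).card * Nat.card T ≤ 2 ^ s.card * (2 * Nat.card T) := by
          rw [← mul_assoc, ← pow_succ]
          gcongr
          exacts [one_le_two, Finset.card_insert_le x s]
      _ ≤ 2 ^ s.card * Nat.card (T ⊔ closure {x} : Subgroup Q) := by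
          gcongr
          exact two_mul_card_le_card_of_lt hTx
      _ ≤ Nat.card S := hcard

theorem exists_fin_closure_range_eq (S : Subgroup Q) :
    ∃ f : Fin (Nat.log 2 (Nat.card Q)) → Q, closure (Set.range f) = S := by
  obtain ⟨s, hs, hcard⟩ := exists_finset_sup_closure_eq (bot_le : ⊥ ≤ S)
  rw [bot_sup_eq] at hs
  rw [card_bot, mul_one] at hcard
  have hk : s.card ≤ Nat.log 2 (Nat.card Q) :=
    Nat.le_log_of_pow_le one_lt_two (hcard.trans (card_le_card_group S))
  refine ⟨fun i => if h : (i : ℕ) < s.card then s.equivFin.symm ⟨i, h⟩ else 1,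
    le_antisymm ?_ ?_⟩
  · rw [closure_le]
    rintro _ ⟨i, rfl⟩
    dsimp only
    split_ifs
    · rw [← hs]
      exact subset_closure (Subtype.coe_prop _)
    · exact one_mem S
  · rw [← hs]
    refine closure_mono fun x hx => ⟨⟨s.equivFin ⟨x, hx⟩, ?_⟩, by simp⟩
    exact (s.equivFin ⟨x, hx⟩).2.trans_le hk

theorem card_subgroup_le_pow_log :
    Nat.card (Subgroup Q) ≤ Nat.card Q ^ Nat.log 2 (Nat.card Q) := by
  calc Nat.card (Subgroup Q) ≤ Nat.card (Fin (Nat.log 2 (Nat.card Q)) → Q) :=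
        Nat.card_le_card_of_surjective (fun f => closure (Set.range f))
          fun S => exists_fin_closure_range_eq S
    _ = Nat.card Q ^ Nat.log 2 (Nat.card Q) := by simp [Nat.card_fun]

end Finite

variable {Γ : Type*} [Group Γ] (N : Subgroup Γ) [N.Normal] [N.FiniteIndex]

instance : Finite {H : Subgroup Γ // N ≤ H} :=
  Finite.of_equiv _ (QuotientGroup.comapMk'OrderIso N).toEquiv

theorem card_overgroups_le_index_pow_log :
    Nat.card {H : Subgroup Γ // N ≤ H} ≤ N.index ^ Nat.log 2 N.index := by
  rw [← Nat.card_congr (QuotientGroup.comapMk'OrderIso N).toEquiv, index_eq_card]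
  exact card_subgroup_le_pow_log

end Subgroup

theorem Real.rpow_logb_self_le_of_le_rpow {m n c : ℝ} (hm : 1 ≤ m) (hn : 0 < n)
    (hmn : m ≤ n ^ c) :
    m ^ logb 2 m ≤ n ^ (c ^ 2 * logb 2 n) := by
  have hlog : logb 2 m ≤ c * logb 2 n :=
    calc logb 2 m ≤ logb 2 (n ^ c) := logb_le_logb_of_le one_lt_two (by linarith) hmn
      _ = c * logb 2 n := logb_rpow_eq_mul_logb_of_pos hn
  have hlog0 : 0 ≤ logb 2 m := logb_nonneg one_lt_two hm
  calc m ^ logb 2 m = (2 : ℝ) ^ (logb 2 m * logb 2 m) := by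
        rw [rpow_mul zero_le_two, rpow_logb two_pos (by norm_num) (by linarith)]
    _ ≤ (2 : ℝ) ^ (logb 2 n * (c ^ 2 * logb 2 n)) :=
        rpow_le_rpow_of_exponent_le one_le_two (by nlinarith)
    _ = n ^ (c ^ 2 * logb 2 n) := by
        rw [rpow_mul zero_le_two, rpow_logb two_pos (by norm_num) hn]

/-- If `|Γ : K_n(Γ)| ≤ n^c` for all `n ≥ 1`, then the number of subgroups of `Γ` of index
at most `n` is at most `n^(c² log₂ n)`. -/
theorem subgroup_growth_of_representation_type {Γ : Type*} [Group Γ] (c : ℝ)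
    (hK : ∀ n : ℕ, 1 ≤ n → (Kn Γ n).FiniteIndex ∧ ((Kn Γ n).index : ℝ) ≤ (n : ℝ) ^ c)
    (n : ℕ) (hn : 1 ≤ n) :
    (Nat.card {K : Subgroup Γ // K.index ≠ 0 ∧ K.index ≤ n} : ℝ) ≤
      (n : ℝ) ^ (c ^ 2 * Real.logb 2 n) := by
  obtain ⟨hfin, hindex⟩ := hK n hn
  set m := (Kn Γ n).index
  have hm : (1 : ℝ) ≤ m := by exact_mod_cast Nat.one_le_iff_ne_zero.mpr hfin.index_ne_zero
  have hcount : Nat.card {K : Subgroup Γ // K.index ≠ 0 ∧ K.index ≤ n} ≤ m ^ Nat.log 2 m :=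
    (Nat.card_le_card_of_injective (fun K => ⟨K.1, Kn_le_of_index_le K.2.1 K.2.2⟩)
      fun _ _ h => Subtype.ext (Subtype.mk.inj h)).trans
      (Kn Γ n).card_overgroups_le_index_pow_log
  calc (Nat.card {K : Subgroup Γ // K.index ≠ 0 ∧ K.index ≤ n} : ℝ)
      ≤ (m : ℝ) ^ (Nat.log 2 m : ℝ) := by exact_mod_cast hcount
    _ ≤ (m : ℝ) ^ Real.logb 2 m :=
        Real.rpow_le_rpow_of_exponent_le hm (by simpa using Real.natLog_le_logb m 2)
    _ ≤ (n : ℝ) ^ (c ^ 2 * Real.logb 2 n) :=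
        Real.rpow_logb_self_le_of_le_rpow hm (by exact_mod_cast hn) hindex
end

section
/- Let F be an algebraically closed field and consider the adjoint action of SL₂(F) on its Lie algebra sl₂(F). Then sl₂(F) = [sl₂(F), SL₂(F)], i.e., sl₂(F) is spanned by elements of the form g·x·g⁻¹ − x with g ∈ SL₂(F), x ∈ sl₂(F). -/
/-!
Conjugating `E_ji` by the transvection `1 + t E_ij` and subtracting `E_ji` gives
`t (E_ii - E_jj) - t² E_ij`. Since the field has an element `a` with `a² ≠ a`, the values
`t = 1` and `t = a` separate `E_ij` from `E_ii - E_jj`, and these matrices span the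
trace-zero matrices. The converse inclusion holds because trace is conjugation invariant.
-/

open Matrix

section

variable {n R : Type*} [Fintype n] [DecidableEq n] [CommRing R]

/-- The generators of the subspace `[sl_n(R), SL_n(R)]`. -/
def slAdjointCommutators (n R : Type*) [Fintype n] [DecidableEq n] [CommRing R] :
    Set (Matrix n n R) :=
  {y | ∃ (g : SpecialLinearGroup n R) (x : Matrix n n R),
    trace x = 0 ∧ y = (g : Matrix n n R) * x * (↑g⁻¹ : Matrix n n R) - x}

theorem trace_conj_sub_self (g : SpecialLinearGroup n R) (x : Matrix n n R) :
    trace ((g : Matrix n n R) * x * (↑g⁻¹ : Matrix n n R) - x) = 0 := by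
  have hinv : (↑g⁻¹ : Matrix n n R) * g = 1 :=
    congrArg Subtype.val (inv_mul_cancel g)
  rw [trace_sub, trace_mul_cycle, hinv, Matrix.one_mul, sub_self]

theorem span_slAdjointCommutators_le_ker_trace :
    Submodule.span R (slAdjointCommutators n R) ≤ LinearMap.ker (traceLinearMap n R R) := by
  rw [Submodule.span_le]
  rintro _ ⟨g, x, -, rfl⟩
  exact trace_conj_sub_self g x

theorem single_sub_single_sub_single_mem_slAdjointCommutators {i j : n} (hij : i ≠ j) (t : R) :
    single i i t - single j j t - single i j (t ^ 2) ∈ slAdjointCommutators n R := by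
  refine ⟨SpecialLinearGroup.transvection hij t, single j i 1,
    trace_single_eq_of_ne j i 1 hij.symm, ?_⟩
  rw [SpecialLinearGroup.transvection_inv, SpecialLinearGroup.transvection_coe,
    SpecialLinearGroup.transvection_coe]
  simp only [sq, add_mul, one_mul, single_mul_single_same, mul_one, ← single_neg, mul_add,
    mul_neg, neg_add_rev]
  abel

theorem ker_trace_le_of_single_mem {p : Submodule R (Matrix n n R)}
    (h_off : ∀ i j, i ≠ j → single i j 1 ∈ p)
    (h_diag : ∀ i j, i ≠ j → single i i 1 - single j j 1 ∈ p) :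
    LinearMap.ker (traceLinearMap n R R) ≤ p := by
  intro x hx
  rw [LinearMap.mem_ker, traceLinearMap_apply] at hx
  rcases isEmpty_or_nonempty n with _ | ⟨⟨k⟩⟩
  · simp [Subsingleton.elim x 0]
  -- modulo `p`, `single i j c` is congruent to `δᵢⱼ c • single k k 1`
  have h_single : ∀ i j c, single i j c - (if i = j then c else 0) • single k k 1 ∈ p := by
    intro i j c
    by_cases hij : i = j
    · subst hij
      by_cases hik : i = k
      · simp [hik]
      · simpa [smul_sub] using p.smul_mem c (h_diag i k hik)
    · simpa [hij] using p.smul_mem c (h_off i j hij)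
  have h_sum : x - trace x • single k k 1 =
      ∑ i, ∑ j, (single i j (x i j) - (if i = j then x i j else 0) • single k k 1) := by
    simp only [Finset.sum_sub_distrib, ← Finset.sum_smul, Finset.sum_ite_eq, Finset.mem_univ,
      if_true, ← matrix_eq_sum_single, trace, diag]
  suffices x - trace x • single k k 1 ∈ p by rwa [hx, zero_smul, sub_zero] at this
  rw [h_sum]
  exact sum_mem fun i _ => sum_mem fun j _ => h_single i j (x i j)

end

theorem span_slAdjointCommutators_eq_ker_trace {n F : Type*} [Fintype n] [DecidableEq n] [Field F]
    {a : F} (ha₀ : a ≠ 0) (ha₁ : a ≠ 1) :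
    Submodule.span F (slAdjointCommutators n F) = LinearMap.ker (traceLinearMap n F F) := by
  set p := Submodule.span F (slAdjointCommutators n F)
  have h_mem (i j : n) (hij : i ≠ j) (t : F) :
      single i i t - single j j t - single i j (t ^ 2) ∈ p :=
    Submodule.subset_span (single_sub_single_sub_single_mem_slAdjointCommutators hij t)
  have h_off (i j : n) (hij : i ≠ j) : single i j 1 ∈ p := by
    have h_comb : (a ^ 2 - a) • single i j (1 : F) =
        a • (single i i 1 - single j j 1 - single i j (1 ^ 2)) -
          (single i i a - single j j a - single i j (a ^ 2)) := by
      simp only [sub_smul, smul_sub, smul_single, smul_eq_mul, mul_one, one_pow]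
      abel
    have hne : a ^ 2 - a ≠ 0 := by
      rw [sq, ← mul_sub_one]; exact mul_ne_zero ha₀ (sub_ne_zero.mpr ha₁)
    rw [← p.smul_mem_iff hne, h_comb]
    exact sub_mem (p.smul_mem a (h_mem i j hij 1)) (h_mem i j hij a)
  refine le_antisymm span_slAdjointCommutators_le_ker_trace (ker_trace_le_of_single_mem h_off ?_)
  intro i j hij
  have := add_mem (h_mem i j hij 1) (h_off i j hij)
  rwa [one_pow, sub_add_cancel] at this

/-- Over an algebraically closed field `F`, the Lie algebra `sl₂(F)` of trace-zero
`2 × 2` matrices is spanned by the elements `g·x·g⁻¹ − x` with `g ∈ SL₂(F)` and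
`x ∈ sl₂(F)`. -/
theorem sl2_eq_span_commutators {F : Type*} [Field F] [IsAlgClosed F] :
    Submodule.span F {y : Matrix (Fin 2) (Fin 2) F |
        ∃ (g : Matrix.SpecialLinearGroup (Fin 2) F) (x : Matrix (Fin 2) (Fin 2) F),
          Matrix.trace x = 0 ∧
            y = (g : Matrix (Fin 2) (Fin 2) F) * x *
                ((g⁻¹ : Matrix.SpecialLinearGroup (Fin 2) F) : Matrix (Fin 2) (Fin 2) F) - x}
      = LinearMap.ker (Matrix.traceLinearMap (Fin 2) F F) := by
  classical
  obtain ⟨a, ha⟩ := Infinite.exists_notMem_finset ({0, 1} : Finset F)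
  rw [Finset.mem_insert, Finset.mem_singleton, not_or] at ha
  exact span_slAdjointCommutators_eq_ker_trace ha.1 ha.2
end

section
/- Let J be a finite nilpotent F_q-algebra and 1+J the associated algebra group. The number of orbits of the conjugation action of 1+J on the character group Irr(J,+) equals the number of conjugacy classes of the group 1+J. -/
open MulAction

/-- Counting fixed additive characters: the number of complex characters of a finite abelian
group `A` that are trivial on the range of `S : A →+ A` equals the size of the kernel of `S`. -/
private lemma card_fixed_char {A : Type*} [AddCommGroup A] [Finite A] (S : A →+ A) :
    Nat.card {l : AddChar A ℂ // ∀ a, l (S a) = 1} = Nat.card {a : A // S a = 0} := by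
  classical
  set N := S.range with hN
  have hmem : ∀ a : A, S a ∈ N := fun a => ⟨a, rfl⟩
  -- characters trivial on the range of `S` are the characters of the quotient
  let E : AddChar (A ⧸ N) ℂ ≃ {l : AddChar A ℂ // ∀ a, l (S a) = 1} :=
  { toFun := fun l => ⟨l.compAddMonoidHom (QuotientAddGroup.mk' N), fun a => by
      have h0 : (QuotientAddGroup.mk' N) (S a) = 0 := (QuotientAddGroup.eq_zero_iff _).2 (hmem a)
      show l ((QuotientAddGroup.mk' N) (S a)) = 1
      rw [h0, AddChar.map_zero_eq_one]⟩
    invFun := fun p =>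
      { toFun := fun q => Quotient.liftOn' q p.1 (by
          intro a b hab
          obtain ⟨c, hc⟩ := QuotientAddGroup.leftRel_apply.1 hab
          have : p.1 b = p.1 a * p.1 (-a + b) := by
            rw [← AddChar.map_add_eq_mul]
            congr 1
            abel
          rw [this, ← hc, p.2 c, mul_one])
        map_zero_eq_one' := by
          show p.1 0 = 1
          exact p.1.map_zero_eq_one
        map_add_eq_mul' := by
          intro x y
          refine Quotient.inductionOn₂' x y (fun a b => ?_)
          show p.1 (a + b) = p.1 a * p.1 b
          exact p.1.map_add_eq_mul a b }
    left_inv := fun l => by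
      ext q
      refine Quotient.inductionOn' q (fun a => ?_)
      rfl
    right_inv := fun p => by
      ext a
      rfl }
  have h1 : Nat.card {l : AddChar A ℂ // ∀ a, l (S a) = 1} = Nat.card (A ⧸ N) := by
    rw [← Nat.card_congr E]
    haveI : Fintype (A ⧸ N) := Fintype.ofFinite _
    rw [Nat.card_eq_fintype_card, Nat.card_eq_fintype_card, AddChar.card_eq]
  have h2 : Nat.card (A ⧸ N) * Nat.card N = Nat.card (S.ker) * Nat.card N := by
    have e1 : Nat.card A = Nat.card (A ⧸ N) * Nat.card N :=
      AddSubgroup.card_eq_card_quotient_mul_card_addSubgroup N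
    have e2 : Nat.card A = Nat.card (A ⧸ S.ker) * Nat.card S.ker :=
      AddSubgroup.card_eq_card_quotient_mul_card_addSubgroup S.ker
    have e3 : Nat.card (A ⧸ S.ker) = Nat.card N :=
      Nat.card_congr (QuotientAddGroup.quotientKerEquivRange S).toEquiv
    rw [← e1, e2, e3, mul_comm]
  have hNpos : 0 < Nat.card N := Nat.card_pos
  have h3 : Nat.card (A ⧸ N) = Nat.card S.ker := Nat.eq_of_mul_eq_mul_right hNpos h2
  have h4 : Nat.card S.ker = Nat.card {a : A // S a = 0} :=
    Nat.card_congr (Equiv.subtypeEquivRight (fun a => S.mem_ker))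
  rw [h1, h3, h4]

/-- Burnside comparison: two actions (of isomorphic finite groups) with elementwise equal
fixed-point counts have the same number of orbits. -/
private lemma card_orbits_eq_of_card_fixed_eq {G G' X Y : Type*} [Group G] [Group G']
    [Finite G] [Finite X] [Finite Y] [MulAction G X] [MulAction G' Y] (φ : G ≃* G')
    (h : ∀ g : G, Nat.card (fixedBy X g) = Nat.card (fixedBy Y (φ g))) :
    Nat.card (Quotient (orbitRel G X)) = Nat.card (Quotient (orbitRel G' Y)) := by
  classical
  haveI : Finite G' := Finite.of_equiv G φ.toEquiv
  cases nonempty_fintype G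
  cases nonempty_fintype G'
  cases nonempty_fintype X
  cases nonempty_fintype Y
  haveI : ∀ g : G, Fintype (fixedBy X g) := fun g => Fintype.ofFinite _
  haveI : ∀ g : G', Fintype (fixedBy Y g) := fun g => Fintype.ofFinite _
  haveI : Fintype (orbitRel.Quotient G X) := Fintype.ofFinite _
  haveI : Fintype (orbitRel.Quotient G' Y) := Fintype.ofFinite _
  have hX := MulAction.sum_card_fixedBy_eq_card_orbits_mul_card_group G X
  have hY := MulAction.sum_card_fixedBy_eq_card_orbits_mul_card_group G' Y
  have hsum : (∑ g : G, Fintype.card (fixedBy X g)) = ∑ g : G', Fintype.card (fixedBy Y g) := by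
    refine Fintype.sum_equiv φ.toEquiv _ _ (fun g => ?_)
    have := h g
    rwa [Nat.card_eq_fintype_card, Nat.card_eq_fintype_card] at this
  have hcard : Fintype.card G = Fintype.card G' := Fintype.card_congr φ.toEquiv
  have : Fintype.card (orbitRel.Quotient G X) * Fintype.card G
      = Fintype.card (orbitRel.Quotient G' Y) * Fintype.card G := by
    rw [← hX, hsum, hY, hcard]
  have hpos : 0 < Fintype.card G := Fintype.card_pos
  have hΩ : Fintype.card (orbitRel.Quotient G X) = Fintype.card (orbitRel.Quotient G' Y) :=
    Nat.eq_of_mul_eq_mul_right hpos this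
  show Nat.card (orbitRel.Quotient G X) = Nat.card (orbitRel.Quotient G' Y)
  rw [Nat.card_eq_fintype_card, Nat.card_eq_fintype_card, hΩ]

/-- Let `J` be a finite nilpotent `F_q`-algebra and `1+J` the associated algebra group
(presented abstractly via a bijection `e : G ≃ J` with `e 1 = 0` and
`e (g h) = e g + e h + (e g)(e h)`).  The number of orbits of the coadjoint action of
`1+J` on the additive character group `Irr(J,+)` equals the number of conjugacy classes
of `1+J`.  Here `(1+b)⁻¹ a (1+b) = a + b' a + a b + b' a b` with `b = e g`,
`b' = e g⁻¹`. -/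
theorem coadjoint_orbit_count {𝔽 : Type*} [Field 𝔽] [Finite 𝔽]
    {J : Type*} [NonUnitalRing J] [Module 𝔽 J] [SMulCommClass 𝔽 J J]
    [IsScalarTower 𝔽 J J] [Finite J]
    {G : Type*} [Group G] (e : G ≃ J) (he1 : e 1 = 0)
    (hmul : ∀ g h : G, e (g * h) = e g + e h + e g * e h) :
    Nat.card (Quot fun (l₁ l₂ : AddChar J ℂ) => ∃ g : G, ∀ a : J,
        l₂ a = l₁ (a + e g⁻¹ * a + a * e g + e g⁻¹ * a * e g))
      = Nat.card (ConjClasses G) := by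
  classical
  haveI : Finite G := Finite.of_equiv J e.symm
  -- the transported conjugation map on `J`, as an additive monoid hom
  let T : G → J →+ J := fun g =>
    { toFun := fun a => a + e g⁻¹ * a + a * e g + e g⁻¹ * a * e g
      map_zero' := by simp
      map_add' := fun a b => by
        simp only [mul_add, add_mul]
        abel }
  have hTapp : ∀ (g : G) (a : J),
      T g a = a + e g⁻¹ * a + a * e g + e g⁻¹ * a * e g := fun g a => rfl
  -- key identity: `T g (e x) = e (g⁻¹ * x * g)`
  have key : ∀ g x : G, T g (e x) = e (g⁻¹ * x * g) := by
    intro g x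
    have h0 : e g⁻¹ + e g + e g⁻¹ * e g = 0 := by
      rw [← hmul, inv_mul_cancel, he1]
    have h1 : e (g⁻¹ * x * g) = e (g⁻¹ * x) + e g + e (g⁻¹ * x) * e g := hmul _ _
    have h2 : e (g⁻¹ * x) = e g⁻¹ + e x + e g⁻¹ * e x := hmul _ _
    rw [hTapp, h1, h2]
    have : e g⁻¹ + e x + e g⁻¹ * e x + e g + (e g⁻¹ + e x + e g⁻¹ * e x) * e g
        = (e x + e g⁻¹ * e x + e x * e g + e g⁻¹ * e x * e g)
          + (e g⁻¹ + e g + e g⁻¹ * e g) := by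
      simp only [add_mul]
      abel
    rw [this, h0, add_zero]
  have T1 : ∀ a : J, T 1 a = a := by
    intro a
    obtain ⟨x, rfl⟩ : ∃ x, e x = a := ⟨e.symm a, e.apply_symm_apply a⟩
    rw [key]
    congr 1
    group
  have Tcomp : ∀ (g h : G) (a : J), T g (T h a) = T (h * g) a := by
    intro g h a
    obtain ⟨x, rfl⟩ : ∃ x, e x = a := ⟨e.symm a, e.apply_symm_apply a⟩
    rw [key, key, key]
    congr 1
    group
  -- the action of `G` on `AddChar J ℂ`
  letI : SMul G (AddChar J ℂ) := ⟨fun g l => l.compAddMonoidHom (T g)⟩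
  have smul_def' : ∀ (g : G) (l : AddChar J ℂ) (a : J), (g • l) a = l (T g a) :=
    fun g l a => rfl
  letI : MulAction G (AddChar J ℂ) :=
    { one_smul := fun l => by
        ext a
        rw [smul_def', T1]
      mul_smul := fun g h l => by
        ext a
        rw [smul_def', smul_def', smul_def', Tcomp] }
  -- identify the `Quot` with the orbit space
  have hQuot : Nat.card (Quot fun (l₁ l₂ : AddChar J ℂ) => ∃ g : G, ∀ a : J,
        l₂ a = l₁ (a + e g⁻¹ * a + a * e g + e g⁻¹ * a * e g))
      = Nat.card (Quotient (orbitRel G (AddChar J ℂ))) := by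
    refine Nat.card_congr (Quot.congrRight (fun l₁ l₂ => ?_))
    show (∃ g : G, ∀ a : J, l₂ a = l₁ (a + e g⁻¹ * a + a * e g + e g⁻¹ * a * e g))
      ↔ l₁ ∈ orbit G l₂
    constructor
    · rintro ⟨g, hg⟩
      refine MulAction.mem_orbit_iff.2 ⟨g⁻¹, ?_⟩
      have hl : g • l₁ = l₂ := by
        ext a
        rw [smul_def', hTapp]
        exact (hg a).symm
      rw [← hl, inv_smul_smul]
    · intro hmem
      obtain ⟨g, hg⟩ := MulAction.mem_orbit_iff.1 hmem
      refine ⟨g⁻¹, fun a => ?_⟩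
      rw [show a + e g⁻¹⁻¹ * a + a * e g⁻¹ + e g⁻¹⁻¹ * a * e g⁻¹ = T g⁻¹ a from (hTapp g⁻¹ a).symm,
        ← smul_def', ← hg, inv_smul_smul]
  -- identify `ConjClasses G` with the orbit space of the conjugation action
  have hConj : Nat.card (ConjClasses G)
      = Nat.card (Quotient (orbitRel (ConjAct G) G)) := by
    refine Nat.card_congr (Quot.congrRight (fun a b => ?_)).symm
    show a ∈ orbit (ConjAct G) b ↔ IsConj a b
    exact ConjAct.mem_orbit_conjAct
  rw [hQuot, hConj]
  -- Burnside comparison, with equal fixed point counts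
  refine card_orbits_eq_of_card_fixed_eq (G := G) (G' := ConjAct G) ConjAct.toConjAct ?_
  intro g
  let S : J →+ J :=
    { toFun := fun a => e g⁻¹ * a + a * e g + e g⁻¹ * a * e g
      map_zero' := by simp
      map_add' := fun a b => by
        simp only [mul_add, add_mul]
        abel }
  have hSapp : ∀ a : J, S a = e g⁻¹ * a + a * e g + e g⁻¹ * a * e g := fun a => rfl
  have hTS : ∀ a : J, T g a = a + S a := by
    intro a
    rw [hTapp, hSapp]
    abel
  have hne : ∀ (l : AddChar J ℂ) (a : J), l a ≠ 0 := by
    intro l a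
    have h1 : l a * l (-a) = 1 := by
      rw [← AddChar.map_add_eq_mul, add_neg_cancel, AddChar.map_zero_eq_one]
    exact left_ne_zero_of_mul_eq_one h1
  have hfix : ∀ x : G, ConjAct.toConjAct g • x = x ↔ T g (e x) = e x := by
    intro x
    have hL : (ConjAct.toConjAct g • x = x) ↔ (g * x = x * g) := by
      rw [ConjAct.toConjAct_smul, mul_inv_eq_iff_eq_mul]
    have hR : (T g (e x) = e x) ↔ (g * x = x * g) := by
      rw [key, Equiv.apply_eq_iff_eq, mul_assoc, inv_mul_eq_iff_eq_mul]
      exact eq_comm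
    rw [hL, hR]
  have E1 : (fixedBy (AddChar J ℂ) g) ≃ {l : AddChar J ℂ // ∀ a, l (S a) = 1} := by
    refine Equiv.subtypeEquivRight (fun l => ?_)
    rw [MulAction.mem_fixedBy]
    constructor
    · intro h a
      have h2 : l (T g a) = l a := by rw [← smul_def' g l a, h]
      rw [hTS, AddChar.map_add_eq_mul] at h2
      exact mul_left_cancel₀ (hne l a) (h2.trans (mul_one (l a)).symm)
    · intro h
      ext a
      rw [smul_def', hTS, AddChar.map_add_eq_mul, h a, mul_one]
  have E2 : {a : J // S a = 0} ≃ {a : J // T g a = a} := by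
    refine Equiv.subtypeEquivRight (fun a => ?_)
    rw [hTS]
    constructor
    · intro h
      rw [h, add_zero]
    · intro h
      have h' : a + S a = a + 0 := by rw [add_zero]; exact h
      exact add_left_cancel h'
  have E3 : {x : G // ConjAct.toConjAct g • x = x} ≃ {a : J // T g a = a} :=
    e.subtypeEquiv hfix
  have E4 : (fixedBy G (ConjAct.toConjAct g)) ≃ {x : G // ConjAct.toConjAct g • x = x} :=
    Equiv.subtypeEquivRight (fun x => MulAction.mem_fixedBy)
  calc Nat.card (fixedBy (AddChar J ℂ) g)
      = Nat.card {l : AddChar J ℂ // ∀ a, l (S a) = 1} := Nat.card_congr E1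
    _ = Nat.card {a : J // S a = 0} := card_fixed_char S
    _ = Nat.card {a : J // T g a = a} := Nat.card_congr E2
    _ = Nat.card {x : G // ConjAct.toConjAct g • x = x} := (Nat.card_congr E3).symm
    _ = Nat.card (fixedBy G (ConjAct.toConjAct g)) := (Nat.card_congr E4).symm
end

section
/- Let J be a finite nilpotent F_q-algebra, λ ∈ Irr(J,+), and B_λ(a,b) = λ(ab − ba). Then the stabilizer of λ under the coadjoint action of 1+J equals 1 + Rad(B_λ), where Rad(B_λ) = {j ∈ J : B_λ(j,u)=1 for all u ∈ J}. -/
/-- Let `J` be a finite nilpotent `F_q`-algebra with associated algebra group `1+J`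
(presented abstractly via a bijection `e : G ≃ J` with `e 1 = 0` and
`e (g h) = e g + e h + (e g)(e h)`), and let `λ ∈ Irr(J,+)` with
`B_λ(a,b) = λ(ab − ba)`.  An element `g = 1 + e g` stabilizes `λ` under the coadjoint
action (given by `λ^(1+b)(a) = λ((1+b) a (1+b)⁻¹)`) if and only if
`e g ∈ Rad(B_λ) = {j : B_λ(j,u) = 1 for all u}`; that is, the stabilizer of `λ` is
`1 + Rad(B_λ)`. -/
theorem coadjoint_stabilizer {𝔽 : Type*} [Field 𝔽] [Finite 𝔽]
    {J : Type*} [NonUnitalRing J] [Module 𝔽 J] [SMulCommClass 𝔽 J J]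
    [IsScalarTower 𝔽 J J] [Finite J]
    {G : Type*} [Group G] (e : G ≃ J) (he1 : e 1 = 0)
    (hmul : ∀ g h : G, e (g * h) = e g + e h + e g * e h)
    (lam : AddChar J ℂ) (g : G) :
    (∀ a : J, lam (a + e g * a + a * e g⁻¹ + e g * a * e g⁻¹) = lam a) ↔
      (∀ u : J, lam (e g * u - u * e g) = 1) := by
  set b := e g with hb
  set c := e g⁻¹ with hc
  have h1 : b + c + b * c = 0 := by
    have := hmul g g⁻¹
    rw [mul_inv_cancel, he1] at this
    exact this.symm
  have h2 : c + b + c * b = 0 := by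
    have := hmul g⁻¹ g
    rw [inv_mul_cancel, he1] at this
    exact this.symm
  have hcomm : b * c = c * b := by
    have h3 : b + c + b * c = c + b + c * b := h1.trans h2.symm
    have : c + b + b * c = c + b + c * b := by rw [add_comm b c] at h3; exact h3
    exact add_left_cancel this
  -- rewrite the coadjoint condition
  have hrw : ∀ a : J, a + b * a + a * c + b * a * c
      = a + ((b * a - a * b) + (b * a - a * b) * c) + a * (b + c + b * c) := by
    intro a; noncomm_ring
  have hne : ∀ a : J, lam a ≠ 0 := by
    intro a h0
    have : lam a * lam (-a) = 1 := by
      rw [← AddChar.map_add_eq_mul, add_neg_cancel, AddChar.map_zero_eq_one]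
    rw [h0, zero_mul] at this
    exact zero_ne_one this
  have hiff : (∀ a : J, lam (a + b * a + a * c + b * a * c) = lam a) ↔
      (∀ a : J, lam ((b * a - a * b) + (b * a - a * b) * c) = 1) := by
    constructor
    · intro H a
      have := H a
      rw [hrw a, h1, mul_zero, add_zero, AddChar.map_add_eq_mul] at this
      exact mul_left_cancel₀ (hne a) (by rw [this, mul_one])
    · intro H a
      rw [hrw a, h1, mul_zero, add_zero, AddChar.map_add_eq_mul, H a, mul_one]
  rw [hiff]
  constructor
  · -- forward: from λ(P a) = 1 for all a, deduce λ([b,u]) = 1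
    intro H u
    have key : b * u - u * b
        = (((b * u - u * b) + (b * u - u * b) * c)
            + ((b * (u * b) - (u * b) * b) + (b * (u * b) - (u * b) * b) * c))
          - (b * u - u * b) * (b + c + b * c) := by
      noncomm_ring
    rw [key, h1, mul_zero, sub_zero, AddChar.map_add_eq_mul, H u, H (u * b), mul_one]
  · -- backward: [b,a]c = [b,ac] using bc = cb
    intro K a
    have key : (b * a - a * b) + (b * a - a * b) * c
        = (b * a - a * b) + (b * (a * c) - (a * c) * b) + a * (c * b - b * c) := by
      noncomm_ring
    rw [key, ← hcomm, sub_self, mul_zero, add_zero, AddChar.map_add_eq_mul, K a, K (a * c),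
      mul_one]
end

section
/- For each n ∈ ℕ, let f(n) be the number of tuples (n₁,…,n_t) of integers with each n_i > 1 and n₁·…·n_t = n (ordered factorizations into factors > 1). Then there exists a constant d such that f(n) ≤ n^d for all n. -/
/-!
Splitting off the first factor `d` gives the recursion `f n = ∑_{d ∣ n, 1 < d} f (n / d)` for
`n ≥ 2`. By strong induction `f n ≤ n ^ 2`: the recursion bounds `f n` by
`∑_{d = 2}^{n} (n / d) ^ 2 ≤ n ^ 2 ∑_{d ≥ 2} 1 / (d (d - 1))`, and the last sum telescopes to
less than `1`.
-/

open Finset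

lemma sum_Icc_one_div_mul_sub_one {n : ℕ} (hn : 1 ≤ n) :
    ∑ d ∈ Icc 2 n, (1 : ℚ) / (d * (d - 1)) = 1 - 1 / n := by
  induction n, hn using Nat.le_induction with
  | base => simp
  | succ n hn ih =>
    have : (n : ℚ) ≠ 0 := by positivity
    rw [sum_Icc_succ_top (by omega), ih, Nat.cast_succ, add_sub_cancel_right]
    field_simp
    ring

lemma natCast_div_sq_le (n : ℕ) {d : ℕ} (hd : 2 ≤ d) :
    ((n / d : ℕ) : ℚ) ^ 2 ≤ (n : ℚ) ^ 2 * (1 / (d * (d - 1))) := by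
  have hd' : (2 : ℚ) ≤ d := by exact_mod_cast hd
  calc ((n / d : ℕ) : ℚ) ^ 2 ≤ ((n : ℚ) / d) ^ 2 := by gcongr; exact Nat.cast_div_le
    _ ≤ (n : ℚ) ^ 2 * (1 / (d * (d - 1))) := by
      rw [div_pow, mul_one_div]
      gcongr <;> nlinarith

lemma sum_Icc_div_sq_le (n : ℕ) : ∑ d ∈ Icc 2 n, (n / d) ^ 2 ≤ n ^ 2 := by
  rcases Nat.eq_zero_or_pos n with rfl | hn
  · simp
  suffices ((∑ d ∈ Icc 2 n, (n / d) ^ 2 : ℕ) : ℚ) ≤ (n : ℚ) ^ 2 by exact_mod_cast this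
  calc ((∑ d ∈ Icc 2 n, (n / d) ^ 2 : ℕ) : ℚ)
      ≤ ∑ d ∈ Icc 2 n, (n : ℚ) ^ 2 * (1 / (d * (d - 1))) := by
        push_cast
        exact sum_le_sum fun d hd => natCast_div_sq_le n (mem_Icc.mp hd).1
    _ = (n : ℚ) ^ 2 - n := by rw [← mul_sum, sum_Icc_one_div_mul_sub_one hn]; field_simp
    _ ≤ (n : ℚ) ^ 2 := by linarith [(Nat.cast_nonneg n : (0 : ℚ) ≤ n)]

abbrev OrderedFactorization (n : ℕ) : Type :=
  {l : List ℕ // (∀ x ∈ l, 1 < x) ∧ l.prod = n}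

namespace OrderedFactorization

instance : IsEmpty (OrderedFactorization 0) where
  false := fun ⟨_, hl, hprod⟩ => by
    have := hl 0 (List.prod_eq_zero_iff.mp hprod)
    omega

instance : Unique (OrderedFactorization 1) where
  default := ⟨[], by simp, rfl⟩
  uniq := by
    rintro ⟨_ | ⟨a, t⟩, hl, hprod⟩
    · rfl
    · have ha : a = 1 := (mul_eq_one.mp hprod).1
      exact absurd (hl a List.mem_cons_self) (by omega)

variable {n : ℕ}

def cons (d : {d ∈ n.divisors | 1 < d}) (l : OrderedFactorization (n / d)) :
    OrderedFactorization n :=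
  ⟨d :: l.1, List.forall_mem_cons.mpr ⟨(mem_filter.mp d.2).2, l.2.1⟩, by
    rw [List.prod_cons, l.2.2, Nat.mul_div_cancel' (Nat.dvd_of_mem_divisors (mem_filter.mp d.2).1)]⟩

lemma cons_bijective (hn : 2 ≤ n) :
    Function.Bijective fun p : Σ d : {d ∈ n.divisors | 1 < d}, OrderedFactorization (n / d) =>
      cons p.1 p.2 := by
  constructor
  · rintro ⟨⟨d, hd⟩, ⟨t, ht⟩⟩ ⟨⟨d', hd'⟩, ⟨t', ht'⟩⟩ h
    simp only [cons, Subtype.mk.injEq, List.cons.injEq] at h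
    obtain ⟨rfl, rfl⟩ := h
    rfl
  · rintro ⟨_ | ⟨d, t⟩, hl, hprod⟩
    · simp at hprod
      omega
    · have hd1 : 1 < d := hl d List.mem_cons_self
      have hd : d ∈ {d ∈ n.divisors | 1 < d} := by
        rw [mem_filter, Nat.mem_divisors]
        exact ⟨⟨Dvd.intro _ hprod, by omega⟩, hd1⟩
      have ht : t.prod = n / d := by
        rw [← hprod, List.prod_cons, Nat.mul_div_cancel_left _ (by omega)]
      exact ⟨⟨⟨d, hd⟩, ⟨t, fun x hx => hl x (List.mem_cons_of_mem d hx), ht⟩⟩, rfl⟩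

noncomputable def sigmaEquiv (hn : 2 ≤ n) :
    (Σ d : {d ∈ n.divisors | 1 < d}, OrderedFactorization (n / d)) ≃ OrderedFactorization n :=
  Equiv.ofBijective _ (cons_bijective hn)

instance (n : ℕ) : Finite (OrderedFactorization n) := by
  induction n using Nat.strong_induction_on with
  | _ n ih =>
    match n, ih with
    | 0, _ => infer_instance
    | 1, _ => infer_instance
    | n + 2, ih =>
      have (d : {d ∈ (n + 2).divisors | 1 < d}) : Finite (OrderedFactorization ((n + 2) / d)) :=
        ih _ (Nat.div_lt_self (by omega) (mem_filter.mp d.2).2)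
      exact Finite.of_equiv _ (sigmaEquiv (by omega))

lemma card_eq_sum (hn : 2 ≤ n) :
    Nat.card (OrderedFactorization n) =
      ∑ d ∈ n.divisors with 1 < d, Nat.card (OrderedFactorization (n / d)) := by
  rw [← Nat.card_congr (sigmaEquiv hn), Nat.card_sigma]
  exact sum_coe_sort _ fun d => Nat.card (OrderedFactorization (n / d))

lemma card_le_sq (n : ℕ) : Nat.card (OrderedFactorization n) ≤ n ^ 2 := by
  induction n using Nat.strong_induction_on with
  | _ n ih =>
    match n, ih with
    | 0, _ => simp
    | 1, _ => simp
    | n + 2, ih =>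
      rw [card_eq_sum (by omega)]
      calc ∑ d ∈ (n + 2).divisors with 1 < d, Nat.card (OrderedFactorization ((n + 2) / d))
          ≤ ∑ d ∈ (n + 2).divisors with 1 < d, ((n + 2) / d) ^ 2 :=
            sum_le_sum fun d hd => ih _ (Nat.div_lt_self (by omega) (mem_filter.mp hd).2)
        _ ≤ ∑ d ∈ Icc 2 (n + 2), ((n + 2) / d) ^ 2 := by
            refine sum_le_sum_of_subset fun d hd => ?_
            rw [mem_filter, Nat.mem_divisors] at hd
            exact mem_Icc.mpr ⟨hd.2, Nat.le_of_dvd (by omega) hd.1.1⟩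
        _ ≤ (n + 2) ^ 2 := sum_Icc_div_sq_le (n + 2)

end OrderedFactorization

/-- The number of ordered factorizations of `n` into integers greater than `1`
is polynomially bounded in `n`. -/
theorem ordered_factorizations_polynomially_bounded :
    ∃ d : ℕ, ∀ n : ℕ, 1 ≤ n →
      Nat.card {l : List ℕ // (∀ x ∈ l, 1 < x) ∧ l.prod = n} ≤ n ^ d :=
  ⟨2, fun n _ => OrderedFactorization.card_le_sq n⟩
end
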